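/- In (L, B, k) as below, let A = (A₁, …, A₇) be the sequence whose coordinate vectors in the basis (D₂, D₃, D₄, D₅, D₇) are A₁ = (0,−1,0,0,1), A₂ = (1,1,0,0,−1), A₃ = (−1,0,1,1,0), A₄ = (1,1,0,−1,0), A₅ = (0,0,1,1,−1), A₆ = (0,0,−1,0,1), A₇ = (0,1,1,0,−1). Then A is a toric system of length 7 in (L, B, k), and there exists a K-isometry φ of (L, B, k) with A_i = φ(D_i) for all i = 1, …, 7. -/

import Mathlib

/- The Picard lattice of the toric surface `X = TV(-2,-1,-1,-1,-1,-2,-1)`: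
`L = ℤ⁵` with basis `(D₂, D₃, D₄, D₅, D₇)` and the intersection pairing given
by the Gram matrix below; `D₁ = -D₂ + D₄ + D₅ - D₇`, `D₆ = D₂ + D₃ - D₅ - D₇`,
and the canonical class is `k = -(D₁ + ⋯ + D₇)`. -/

/-- Gram matrix of the intersection pairing in the basis `(D₂, D₃, D₄, D₅, D₇)`. -/
def gram : Matrix (Fin 5) (Fin 5) ℤ :=
  !![-1, 1, 0, 0, 0;
      1, -1, 1, 0, 0;
      0, 1, -1, 1, 0;
      0, 0, 1, -1, 0;
      0, 0, 0, 0, -1]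

/-- The intersection pairing on `L = ℤ⁵`. -/
def picForm (x y : Fin 5 → ℤ) : ℤ := dotProduct x (gram.mulVec y)

def vD2 : Fin 5 → ℤ := ![1, 0, 0, 0, 0]
def vD3 : Fin 5 → ℤ := ![0, 1, 0, 0, 0]
def vD4 : Fin 5 → ℤ := ![0, 0, 1, 0, 0]
def vD5 : Fin 5 → ℤ := ![0, 0, 0, 1, 0]
def vD7 : Fin 5 → ℤ := ![0, 0, 0, 0, 1]
def vD1 : Fin 5 → ℤ := -vD2 + vD4 + vD5 - vD7
def vD6 : Fin 5 → ℤ := vD2 + vD3 - vD5 - vD7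

/-- The canonical class `k = -(D₁ + D₂ + D₃ + D₄ + D₅ + D₆ + D₇)`. -/
def vK : Fin 5 → ℤ := -(vD1 + vD2 + vD3 + vD4 + vD5 + vD6 + vD7)

/-- A `K`-isometry: a ℤ-linear automorphism of `L` preserving the intersection
pairing and fixing the canonical class. -/
def IsKIsometry (φ : (Fin 5 → ℤ) ≃ₗ[ℤ] (Fin 5 → ℤ)) : Prop :=
  (∀ x y, picForm (φ x) (φ y) = picForm x y) ∧ φ vK = vK

/-- A toric system of length `m ≥ 3` in `(L, picForm, vK)`: a cyclic sequence
(indices modulo `m`) with `B(A_i, A_{i+1}) = 1`, `B(A_i, A_j) = 0` for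
cyclically non-adjacent distinct `i, j`, and `∑ A_i = -k`. -/
def IsToricSystem {m : ℕ} [NeZero m] (A : Fin m → Fin 5 → ℤ) : Prop :=
  3 ≤ m ∧ (∀ i, picForm (A i) (A (i + 1)) = 1) ∧
    (∀ i j : Fin m, i ≠ j → j ≠ i + 1 → i ≠ j + 1 → picForm (A i) (A j) = 0) ∧
    ∑ i, A i = -vK

/-- The standard toric system `(D₁, …, D₇)`. -/
def stdSys : Fin 7 → Fin 5 → ℤ := ![vD1, vD2, vD3, vD4, vD5, vD6, vD7]

/-- The non-constructible exceptional toric system `A = (A₁, …, A₇)`, given by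
its coordinate vectors in the basis `(D₂, D₃, D₄, D₅, D₇)`. -/
def exSys : Fin 7 → Fin 5 → ℤ :=
  ![![0, -1, 0, 0, 1], ![1, 1, 0, 0, -1], ![-1, 0, 1, 1, 0], ![1, 1, 0, -1, 0],
    ![0, 0, 1, 1, -1], ![0, 0, -1, 0, 1], ![0, 1, 1, 0, -1]]

/-!
An isometry with `φ(D_i) = A_i` is determined by its values on the basis `D₂, D₃, D₄, D₅, D₇`.
That the resulting integer matrix preserves the Gram matrix and `k` and sends `D₁, D₆` to
`A₁, A₆` is a finite computation; it is invertible over `ℤ` because the Gram matrix is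
unimodular. Finally `A` is a toric system because `K`-isometries carry the standard toric
system `(D_i)` to toric systems.
-/

open scoped Matrix

namespace Matrix

variable {R n : Type*} [Fintype n]

theorem dotProduct_mulVec_mulVec_conj [CommSemiring R] (G M : Matrix n n R) (x y : n → R) :
    (M *ᵥ x) ⬝ᵥ (G *ᵥ (M *ᵥ y)) = x ⬝ᵥ ((Mᵀ * G * M) *ᵥ y) := by
  rw [mulVec_mulVec, dotProduct_mulVec, ← vecMul_transpose, vecMul_vecMul,
    ← dotProduct_mulVec, Matrix.mul_assoc]

theorem isUnit_det_of_transpose_mul_mul_eq [CommRing R] [DecidableEq n] {G M : Matrix n n R}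
    (hG : IsUnit G.det) (hM : Mᵀ * G * M = G) : IsUnit M.det := by
  have h : G.det * (M.det * M.det) = G.det * 1 := by
    simpa [det_mul, det_transpose, mul_comm, mul_left_comm] using congrArg det hM
  exact .of_mul_eq_one _ (hG.mul_left_cancel h)

end Matrix

theorem picForm_mulVec_mulVec {M : Matrix (Fin 5) (Fin 5) ℤ} (hM : Mᵀ * gram * M = gram)
    (x y : Fin 5 → ℤ) : picForm (M *ᵥ x) (M *ᵥ y) = picForm x y := by
  rw [picForm, Matrix.dotProduct_mulVec_mulVec_conj, hM, picForm]

theorem isKIsometry_toLinearEquiv' {M : Matrix (Fin 5) (Fin 5) ℤ} (hInv : Invertible M)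
    (hM : Mᵀ * gram * M = gram) (hK : M *ᵥ vK = vK) : IsKIsometry (M.toLinearEquiv' hInv) :=
  ⟨picForm_mulVec_mulVec hM, hK⟩

theorem IsToricSystem.map {m : ℕ} [NeZero m] {A : Fin m → Fin 5 → ℤ} (hA : IsToricSystem A)
    {φ : (Fin 5 → ℤ) ≃ₗ[ℤ] (Fin 5 → ℤ)} (hφ : IsKIsometry φ) : IsToricSystem (φ ∘ A) := by
  obtain ⟨hm, hadj, hfar, hsum⟩ := hA
  refine ⟨hm, fun i => ?_, fun i j hij hji hij' => ?_, ?_⟩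
  · simpa only [Function.comp_apply, hφ.1] using hadj i
  · simpa only [Function.comp_apply, hφ.1] using hfar i j hij hji hij'
  · simp only [Function.comp_apply, ← map_sum, hsum, map_neg, hφ.2]

theorem isToricSystem_stdSys : IsToricSystem stdSys :=
  ⟨by norm_num, by decide, by decide, by decide⟩

set_option maxRecDepth 10000 in
theorem det_gram : gram.det = 1 := by decide

-- The columns are `A₂, A₃, A₄, A₅, A₇`, the prescribed images of the basis `D₂, D₃, D₄, D₅, D₇`.
def phiMatrix : Matrix (Fin 5) (Fin 5) ℤ :=
  (Matrix.of ![exSys 1, exSys 2, exSys 3, exSys 4, exSys 6])ᵀ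

theorem phiMatrix_transpose_mul_gram_mul : phiMatrixᵀ * gram * phiMatrix = gram := by decide

theorem phiMatrix_mulVec_vK : phiMatrix *ᵥ vK = vK := by decide

theorem phiMatrix_mulVec_stdSys : ∀ i, phiMatrix *ᵥ stdSys i = exSys i := by decide

theorem isUnit_det_phiMatrix : IsUnit phiMatrix.det :=
  Matrix.isUnit_det_of_transpose_mul_mul_eq (det_gram ▸ isUnit_one)
    phiMatrix_transpose_mul_gram_mul

/-- The sequence `A` is a toric system of length `7` on
`X = TV(-2,-1,-1,-1,-1,-2,-1)`, and there is a `K`-isometry `φ` with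
`A_i = φ(D_i)` for all `i`. -/
theorem exceptional_system_in_orbit :
    IsToricSystem exSys ∧
    ∃ φ : (Fin 5 → ℤ) ≃ₗ[ℤ] (Fin 5 → ℤ), IsKIsometry φ ∧
      ∀ i : Fin 7, exSys i = φ (stdSys i) := by
  let φ := phiMatrix.toLinearEquiv' (Matrix.invertibleOfIsUnitDet _ isUnit_det_phiMatrix)
  have hφ : IsKIsometry φ :=
    isKIsometry_toLinearEquiv' _ phiMatrix_transpose_mul_gram_mul phiMatrix_mulVec_vK
  have hA : exSys = φ ∘ stdSys := funext fun i => (phiMatrix_mulVec_stdSys i).symm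
  exact ⟨hA ▸ isToricSystem_stdSys.map hφ, φ, hφ, congrFun hA⟩
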